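/- arXiv:1905.08075 — 3 statements merged into one kernel-verified Lean document; each statement's English description precedes it below -/
import Mathlib

section
/- Let μ* be an upper quasi-density on ℕ and X ⊆ ℕ. Then inf{ μ*(A) : A a finite union of arithmetic progressions of ℕ with X ⊆ A } = inf_{k ≥ 1} r_k(X)/k; in particular, this infimum does not depend on the choice of the upper quasi-density μ*. -/
open Set Filter Topology

/-- An upper quasi-density on ℕ. -/
def IsUpperQuasiDensity (μ : Set ℕ → ℝ) : Prop :=
  μ Set.univ = 1 ∧
  (∀ X : Set ℕ, μ X ≤ 1) ∧
  (∀ X Y : Set ℕ, μ (X ∪ Y) ≤ μ X + μ Y) ∧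
  (∀ (X : Set ℕ) (k : ℕ), 0 < k → μ ((fun x => k * x) '' X) = μ X / k) ∧
  (∀ (X : Set ℕ) (h : ℕ), μ ((fun x => x + h) '' X) = μ X)

/-- An upper density on ℕ: a monotone upper quasi-density. -/
def IsUpperDensity (μ : Set ℕ → ℝ) : Prop :=
  IsUpperQuasiDensity μ ∧ ∀ X Y : Set ℕ, X ⊆ Y → μ X ≤ μ Y

/-- A set of naturals is small if every upper quasi-density vanishes on it. -/
def SmallSet (X : Set ℕ) : Prop :=
  ∀ μ : Set ℕ → ℝ, IsUpperQuasiDensity μ → μ X = 0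

/-- The upper asymptotic density of a set of naturals. -/
noncomputable def upperAsymptoticDensity (X : Set ℕ) : ℝ :=
  limsup (fun n : ℕ => ((X ∩ Set.Icc 1 n).ncard : ℝ) / n) atTop

/-- The arithmetic progression k·ℕ + h. -/
def AP (k h : ℕ) : Set ℕ := {x : ℕ | ∃ m : ℕ, x = k * m + h}

/-- A finite union of arithmetic progressions of ℕ. -/
def IsFinUnionAP (A : Set ℕ) : Prop :=
  ∃ s : Finset (ℕ × ℕ), (∀ p ∈ s, 0 < p.1) ∧ A = ⋃ p ∈ s, AP p.1 p.2

/-- The upper Buck density of a set of naturals. -/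
noncomputable def buckDensity (X : Set ℕ) : ℝ :=
  sInf {d : ℝ | ∃ A : Set ℕ, IsFinUnionAP A ∧ X ⊆ A ∧ d = upperAsymptoticDensity A}

/-- `rk k X` is the number of residues h ∈ [0, k-1] with X ∩ (k·ℕ + h) ≠ ∅. -/
noncomputable def rk (k : ℕ) (X : Set ℕ) : ℕ :=
  {h : ℕ | h < k ∧ (X ∩ AP k h).Nonempty}.ncard

/-- `wk μ k S` is the number of residues h ∈ [0, k-1] with μ(S ∩ (k·ℕ + h)) ≠ 0. -/
noncomputable def wk (μ : Set ℕ → ℝ) (k : ℕ) (S : Set ℕ) : ℕ :=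
  {h : ℕ | h < k ∧ μ (S ∩ AP k h) ≠ 0}.ncard

/-!
Both sides are compared through a single modulus. For `k ≥ 1`, the residue classes mod `k` met
by `X` form a finite union of progressions covering `X`, of quasi-density at most `r_k(X)/k` by
subadditivity and `μ*(k·ℕ + h) = 1/k`. Conversely, a finite union `A` of progressions is periodic
modulo the product `k` of their differences beyond the largest offset, so `ℕ` is covered by `A`,
the `k - r_k(A)` classes mod `k` missing `A`, and a finite set; as finite sets have quasi-density
`0`, this gives `1 ≤ μ*(A) + (k - r_k(A))/k`, that is `r_k(X)/k ≤ r_k(A)/k ≤ μ*(A)`.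
-/

open scoped Classical

noncomputable def residuesMeeting (k : ℕ) (X : Set ℕ) : Finset ℕ :=
  (Finset.range k).filter fun h => (X ∩ AP k h).Nonempty

lemma rk_eq_card_residuesMeeting (k : ℕ) (X : Set ℕ) : rk k X = (residuesMeeting k X).card := by
  rw [rk, ← Set.ncard_coe_finset]
  congr 1
  ext h
  simp [residuesMeeting]

lemma residuesMeeting_mono (k : ℕ) {X Y : Set ℕ} (hXY : X ⊆ Y) :
    residuesMeeting k X ⊆ residuesMeeting k Y :=
  Finset.monotone_filter_right _ fun _ _ hX => hX.mono (Set.inter_subset_inter_left _ hXY)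

lemma mem_AP_iff {k h x : ℕ} : x ∈ AP k h ↔ h ≤ x ∧ x ≡ h [MOD k] := by
  constructor
  · rintro ⟨m, rfl⟩
    exact ⟨Nat.le_add_left h _, ((Nat.modEq_iff_dvd' (Nat.le_add_left h _)).2 (by simp)).symm⟩
  · rintro ⟨hle, hmod⟩
    obtain ⟨m, hm⟩ := (Nat.modEq_iff_dvd' hle).1 hmod.symm
    exact ⟨m, by omega⟩

lemma mem_AP_mod (k x : ℕ) : x ∈ AP k (x % k) :=
  ⟨x / k, (Nat.div_add_mod x k).symm⟩

lemma isFinUnionAP_biUnion {k : ℕ} (hk : 0 < k) (t : Finset ℕ) :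
    IsFinUnionAP (⋃ h ∈ t, AP k h) := by
  refine ⟨t.image fun h => (k, h), by simp [hk], ?_⟩
  ext x
  simp

lemma subset_biUnion_residuesMeeting {k : ℕ} (hk : 0 < k) (X : Set ℕ) :
    X ⊆ ⋃ h ∈ residuesMeeting k X, AP k h := fun x hx =>
  Set.mem_biUnion
    (Finset.mem_filter.2 ⟨Finset.mem_range.2 (Nat.mod_lt x hk), x, hx, mem_AP_mod k x⟩)
    (mem_AP_mod k x)

lemma IsFinUnionAP.exists_saturated {A : Set ℕ} (hA : IsFinUnionAP A) :
    ∃ k, 0 < k ∧ ∃ N, ∀ x, N ≤ x → (A ∩ AP k (x % k)).Nonempty → x ∈ A := by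
  obtain ⟨s, hs, rfl⟩ := hA
  refine ⟨∏ p ∈ s, p.1, Finset.prod_pos hs, s.sup Prod.snd, fun x hx => ?_⟩
  rintro ⟨y, hyA, hyx⟩
  obtain ⟨p, hp, hyp⟩ := Set.mem_iUnion₂.1 hyA
  have hxy : x ≡ y [MOD p.1] :=
    (((mem_AP_iff.1 hyx).2.trans (Nat.mod_modEq x _)).symm).of_dvd (Finset.dvd_prod_of_mem _ hp)
  exact Set.mem_biUnion hp
    (mem_AP_iff.2 ⟨(Finset.le_sup (f := Prod.snd) hp).trans hx, hxy.trans (mem_AP_iff.1 hyp).2⟩)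

namespace IsUpperQuasiDensity

variable {μ : Set ℕ → ℝ}

lemma apply_union_le (hμ : IsUpperQuasiDensity μ) (X Y : Set ℕ) : μ (X ∪ Y) ≤ μ X + μ Y :=
  hμ.2.2.1 X Y

lemma apply_empty (hμ : IsUpperQuasiDensity μ) : μ ∅ = 0 := by
  have h := hμ.2.2.2.1 ∅ 2 two_pos
  simp only [Set.image_empty] at h
  linarith

lemma apply_singleton (hμ : IsUpperQuasiDensity μ) (n : ℕ) : μ {n} = 0 := by
  have h0 : μ {0} = 0 := by
    have h := hμ.2.2.2.1 {0} 2 two_pos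
    simp only [Set.image_singleton, mul_zero] at h
    linarith
  simpa using (hμ.2.2.2.2 {0} n).trans h0

lemma apply_AP (hμ : IsUpperQuasiDensity μ) {k : ℕ} (hk : 0 < k) (h : ℕ) :
    μ (AP k h) = 1 / k := by
  have hAP : (fun x => x + h) '' ((fun x => k * x) '' Set.univ) = AP k h := by
    ext x
    simp [AP, eq_comm]
  rw [← hAP, hμ.2.2.2.2, hμ.2.2.2.1 _ _ hk, hμ.1]

lemma apply_biUnion_le (hμ : IsUpperQuasiDensity μ) {ι : Type*} (t : Finset ι)
    (f : ι → Set ℕ) : μ (⋃ i ∈ t, f i) ≤ ∑ i ∈ t, μ (f i) := by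
  induction t using Finset.induction_on with
  | empty => simp [hμ.apply_empty]
  | insert a t ha ih =>
    rw [Finset.set_biUnion_insert, Finset.sum_insert ha]
    exact (hμ.apply_union_le _ _).trans (add_le_add le_rfl ih)

lemma apply_nonpos_of_finite (hμ : IsUpperQuasiDensity μ) {X : Set ℕ} (hX : X.Finite) :
    μ X ≤ 0 := by
  simpa [hμ.apply_singleton] using hμ.apply_biUnion_le hX.toFinset (fun x => {x})

lemma apply_biUnion_AP_le (hμ : IsUpperQuasiDensity μ) {k : ℕ} (hk : 0 < k) (t : Finset ℕ) :
    μ (⋃ h ∈ t, AP k h) ≤ t.card / k := by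
  simpa [hμ.apply_AP hk, div_eq_mul_inv] using hμ.apply_biUnion_le t (AP k)

lemma rk_div_le_of_saturated (hμ : IsUpperQuasiDensity μ) {A : Set ℕ} {k N : ℕ} (hk : 0 < k)
    (hsat : ∀ x, N ≤ x → (A ∩ AP k (x % k)).Nonempty → x ∈ A) :
    (rk k A : ℝ) / k ≤ μ A := by
  set T := Finset.range k \ residuesMeeting k A
  have hcover : A ∪ ((⋃ h ∈ T, AP k h) ∪ Set.Iio N) = Set.univ := by
    refine Set.eq_univ_of_forall fun x => ?_
    by_cases hxN : x < N
    · exact Or.inr (Or.inr hxN)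
    by_cases hmeet : (A ∩ AP k (x % k)).Nonempty
    · exact Or.inl (hsat x (not_lt.1 hxN) hmeet)
    · exact Or.inr (Or.inl (Set.mem_biUnion
        (by simp [T, residuesMeeting, hmeet, Nat.mod_lt x hk]) (mem_AP_mod k x)))
  have hT : (T.card : ℝ) = k - rk k A := by
    have hsub : residuesMeeting k A ⊆ Finset.range k := Finset.filter_subset _ _
    rw [rk_eq_card_residuesMeeting, Finset.card_sdiff_of_subset hsub,
      Nat.cast_sub (Finset.card_le_card hsub), Finset.card_range]
  have hone : (1 : ℝ) ≤ μ A + T.card / k :=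
    calc (1 : ℝ) = μ (A ∪ ((⋃ h ∈ T, AP k h) ∪ Set.Iio N)) := by rw [hcover, hμ.1]
      _ ≤ μ A + (μ (⋃ h ∈ T, AP k h) + μ (Set.Iio N)) :=
        (hμ.apply_union_le _ _).trans (add_le_add le_rfl (hμ.apply_union_le _ _))
      _ ≤ μ A + (T.card / k + 0) := by
        gcongr
        · exact hμ.apply_biUnion_AP_le hk T
        · exact hμ.apply_nonpos_of_finite (Set.finite_Iio N)
      _ = μ A + T.card / k := by rw [add_zero]
  have hk' : (k : ℝ) ≠ 0 := by positivity
  rw [hT, sub_div, div_self hk'] at hone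
  linarith

lemma exists_isFinUnionAP_le_rk_div (hμ : IsUpperQuasiDensity μ) (X : Set ℕ) {k : ℕ}
    (hk : 0 < k) : ∃ A, IsFinUnionAP A ∧ X ⊆ A ∧ μ A ≤ (rk k X : ℝ) / k :=
  ⟨_, isFinUnionAP_biUnion hk _, subset_biUnion_residuesMeeting hk X,
    (hμ.apply_biUnion_AP_le hk _).trans_eq (by rw [rk_eq_card_residuesMeeting])⟩

lemma exists_rk_div_le_of_isFinUnionAP (hμ : IsUpperQuasiDensity μ) {X A : Set ℕ}
    (hA : IsFinUnionAP A) (hXA : X ⊆ A) : ∃ k, 0 < k ∧ (rk k X : ℝ) / k ≤ μ A := by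
  obtain ⟨k, hk, N, hsat⟩ := hA.exists_saturated
  have hrk : rk k X ≤ rk k A := by
    simpa only [rk_eq_card_residuesMeeting] using
      Finset.card_le_card (residuesMeeting_mono k hXA)
  refine ⟨k, hk, le_trans ?_ (hμ.rk_div_le_of_saturated hk hsat)⟩
  gcongr

end IsUpperQuasiDensity

/-- For any upper quasi-density μ*, the infimum of μ*(A) over finite unions A of
arithmetic progressions containing X equals inf_{k ≥ 1} r_k(X)/k. -/
theorem inf_over_finUnionAP_eq_iInf_rk (μ : Set ℕ → ℝ)
    (hμ : IsUpperQuasiDensity μ) (X : Set ℕ) :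
    sInf {d : ℝ | ∃ A : Set ℕ, IsFinUnionAP A ∧ X ⊆ A ∧ d = μ A} =
      ⨅ k : ℕ+, (rk (k : ℕ) X : ℝ) / ((k : ℕ) : ℝ) := by
  refine csInf_eq_csInf_of_forall_exists_le ?_ ?_
  · rintro _ ⟨A, hA, hXA, rfl⟩
    obtain ⟨k, hk, hle⟩ := hμ.exists_rk_div_le_of_isFinUnionAP hA hXA
    exact ⟨_, ⟨⟨k, hk⟩, rfl⟩, hle⟩
  · rintro _ ⟨k, rfl⟩
    obtain ⟨A, hA, hXA, hle⟩ := hμ.exists_isFinUnionAP_le_rk_div X k.pos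
    exact ⟨_, ⟨A, hA, hXA, rfl⟩, hle⟩
end

section
/- Let b ≥ 2 be an integer and let s = (s_1, …, s_k) be a non-empty finite sequence with entries in {0, …, b−1}. Then the set of all x ∈ ℕ whose base-b digit representation does not contain the string s_1 ⋯ s_k as a contiguous substring is small. -/
open Set Filter Topology

lemma uqd_nonneg {μ : Set ℕ → ℝ} (hμ : IsUpperQuasiDensity μ) (X : Set ℕ) : 0 ≤ μ X := by
  obtain ⟨h1, h2, h3, _, _⟩ := hμ
  have := h3 X Xᶜ
  rw [Set.union_compl_self, h1] at this
  have := h2 Xᶜ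
  linarith

lemma uqd_empty {μ : Set ℕ → ℝ} (hμ : IsUpperQuasiDensity μ) : μ ∅ = 0 := by
  obtain ⟨_, _, _, h4, _⟩ := hμ
  have := h4 ∅ 2 (by norm_num)
  rw [Set.image_empty] at this
  linarith

lemma uqd_subset_AP {μ : Set ℕ → ℝ} (hμ : IsUpperQuasiDensity μ) {X : Set ℕ} {k h : ℕ}
    (hk : 0 < k) (hX : X ⊆ AP k h) : μ X ≤ 1 / k := by
  obtain ⟨_, h2, _, h4, h5⟩ := hμ
  set Y : Set ℕ := {m | k * m + h ∈ X} with hY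
  have hXeq : X = (fun x => x + h) '' ((fun x => k * x) '' Y) := by
    ext x
    simp only [Set.mem_image, hY, Set.mem_setOf_eq]
    constructor
    · intro hx
      obtain ⟨m, hm⟩ := hX hx
      exact ⟨k * m, ⟨m, hm ▸ hx, rfl⟩, hm.symm⟩
    · rintro ⟨_, ⟨m, hm, rfl⟩, rfl⟩
      exact hm
  rw [hXeq, h5, h4 Y k hk]
  have := h2 Y
  have hk' : (0 : ℝ) < k := by exact_mod_cast hk
  rw [div_le_div_iff₀ hk' hk']
  nlinarith [uqd_nonneg ⟨by assumption, h2, by assumption, h4, h5⟩ Y]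

lemma uqd_biUnion {μ : Set ℕ → ℝ} (hμ : IsUpperQuasiDensity μ) (F : Finset ℕ) (f : ℕ → Set ℕ) :
    μ (⋃ i ∈ F, f i) ≤ ∑ i ∈ F, μ (f i) := by
  classical
  induction F using Finset.induction with
  | empty => simp [uqd_empty hμ]
  | @insert a F' hx ih =>
    rw [Finset.set_biUnion_insert, Finset.sum_insert hx]
    calc μ (f a ∪ ⋃ i ∈ F', f i) ≤ μ (f a) + μ (⋃ i ∈ F', f i) := hμ.2.2.1 _ _
    _ ≤ _ := by linarith

lemma uqd_cover {μ : Set ℕ → ℝ} (hμ : IsUpperQuasiDensity μ) {X : Set ℕ} {k : ℕ}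
    (hk : 0 < k) (F : Finset ℕ) (hX : X ⊆ ⋃ h ∈ F, AP k h) : μ X ≤ F.card / k := by
  have hXeq : X = ⋃ h ∈ F, (X ∩ AP k h) := by
    ext x; constructor
    · intro hx
      obtain ⟨S, ⟨h, rfl⟩, hS⟩ := hX hx
      simp only [Set.mem_iUnion] at hS ⊢
      obtain ⟨hh, hmem⟩ := hS
      exact ⟨h, hh, hx, hmem⟩
    · intro hx
      simp only [Set.mem_iUnion] at hx
      obtain ⟨h, _, hx, _⟩ := hx
      exact hx
  calc μ X = μ (⋃ h ∈ F, (X ∩ AP k h)) := by rw [← hXeq]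
  _ ≤ ∑ h ∈ F, μ (X ∩ AP k h) := uqd_biUnion hμ F _
  _ ≤ ∑ h ∈ F, 1 / (k : ℝ) := by
      apply Finset.sum_le_sum
      intro i _
      exact uqd_subset_AP hμ hk Set.inter_subset_right
  _ = F.card / k := by
      rw [Finset.sum_const, nsmul_eq_mul]
      ring

lemma digits_mul_pow_add {b : ℕ} (hb : 2 ≤ b) {q : ℕ} (hq : 0 < q) :
    ∀ n r, r < b ^ n →
      Nat.digits b (q * b ^ n + r) =
        Nat.digits b r ++ List.replicate (n - (Nat.digits b r).length) 0 ++ Nat.digits b q := by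
  have hb1 : 1 < b := hb
  intro n
  induction n with
  | zero =>
    intro r hr
    rw [pow_zero] at hr
    interval_cases r
    simp
  | succ n ih =>
    intro r hr
    have hbpos : 0 < b := by omega
    have hNpos : 0 < q * b ^ (n + 1) + r := by positivity
    have harr : q * b ^ (n + 1) + r = b * (q * b ^ n) + r := by ring
    have hdiv : (q * b ^ (n + 1) + r) / b = q * b ^ n + r / b := by
      rw [harr, Nat.mul_add_div hbpos]
    have hmod : (q * b ^ (n + 1) + r) % b = r % b := by
      rw [harr, Nat.mul_add_mod]
    have hrb : r / b < b ^ n := by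
      rw [Nat.div_lt_iff_lt_mul hbpos, ← pow_succ]; exact hr
    rw [Nat.digits_def' hb1 hNpos, hmod, hdiv, ih _ hrb]
    rcases Nat.eq_zero_or_pos r with hr0 | hr0
    · subst hr0
      simp [List.replicate_succ]
    · rw [Nat.digits_def' hb1 hr0]
      simp [List.cons_append, Nat.succ_sub_succ, List.length_cons]

lemma digits_mod_pow_prefix {b : ℕ} (hb : 2 ≤ b) (x n : ℕ) :
    Nat.digits b (x % b ^ n) <+: Nat.digits b x := by
  have hpow : 0 < b ^ n := pow_pos (by omega) n
  rcases Nat.eq_zero_or_pos (x / b ^ n) with h0 | h0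
  · have hx : x % b ^ n = x := by
      have h1 := Nat.div_add_mod' x (b ^ n)
      rw [h0, zero_mul, zero_add] at h1
      exact h1
    rw [hx]
  · have hx : x = (x / b ^ n) * b ^ n + x % b ^ n := (Nat.div_add_mod' x (b ^ n)).symm
    conv_rhs => rw [hx, digits_mul_pow_add hb h0 n (x % b ^ n) (Nat.mod_lt _ hpow)]
    exact (List.prefix_append _ _).trans (List.prefix_append _ _)

lemma avoid_mod_pow {b : ℕ} (hb : 2 ≤ b) (s : List ℕ) (x n : ℕ)
    (hx : ¬ s <:+: (Nat.digits b x).reverse) :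
    ¬ s <:+: (Nat.digits b (x % b ^ n)).reverse := by
  intro hcon
  apply hx
  obtain ⟨t, ht⟩ := digits_mod_pow_prefix hb x n
  have hrev : (Nat.digits b x).reverse = t.reverse ++ (Nat.digits b (x % b ^ n)).reverse := by
    rw [← ht, List.reverse_append]
  rw [hrev]
  exact hcon.trans (List.suffix_append _ _).isInfix

/-- The finite set of naturals below `n` avoiding the digit string `s` in base `b`. -/
def avoidF (b : ℕ) (s : List ℕ) (n : ℕ) : Finset ℕ :=
  (Finset.range n).filter (fun h => ¬ s <:+: (Nat.digits b h).reverse)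

lemma avoid_card_step {b : ℕ} (hb : 2 ≤ b) (s : List ℕ) (hsd : ∀ d ∈ s, d < b) (n : ℕ) :
    (avoidF b s (b ^ (n + (s.length + 1)))).card ≤
      (b ^ (s.length + 1) - 1) * (avoidF b s (b ^ n)).card := by
  classical
  set k : ℕ := s.length + 1 with hk
  set L : List ℕ := s.reverse ++ [1] with hL
  have hLd : ∀ d ∈ L, d < b := by
    intro d hd
    rw [hL, List.mem_append] at hd
    rcases hd with hd | hd
    · exact hsd d (List.mem_reverse.mp hd)
    · simp only [List.mem_singleton] at hd
      omega
  set q : ℕ := Nat.ofDigits b L with hq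
  have hdq : Nat.digits b q = L := Nat.digits_ofDigits b hb L hLd (by intro _; simp [hL])
  have hqpos : 0 < q := by
    rcases Nat.eq_zero_or_pos q with h0 | h0
    · rw [h0] at hdq
      simp [hL] at hdq
    · exact h0
  have hqlt : q < b ^ k := by
    have h1 := Nat.ofDigits_lt_base_pow_length hb hLd
    have h2 : L.length = k := by simp [hL, hk]
    rwa [h2] at h1
  have hpn : 0 < b ^ n := pow_pos (by omega) n
  have hmaps : ∀ h ∈ avoidF b s (b ^ (n + k)),
      (h / b ^ n, h % b ^ n) ∈ ((Finset.range (b ^ k)).erase q) ×ˢ (avoidF b s (b ^ n)) := by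
    intro h hh
    rw [avoidF, Finset.mem_filter, Finset.mem_range] at hh
    obtain ⟨hlt, havoid⟩ := hh
    rw [Finset.mem_product]
    refine ⟨Finset.mem_erase.mpr ⟨?_, Finset.mem_range.mpr ?_⟩, ?_⟩
    · -- h / b ^ n ≠ q
      intro hdiv
      have hdiv' : h / b ^ n = q := hdiv
      apply havoid
      have hx : h = q * b ^ n + h % b ^ n := by
        conv_lhs => rw [← Nat.div_add_mod' h (b ^ n), hdiv']
      rw [hx, digits_mul_pow_add hb hqpos n (h % b ^ n) (Nat.mod_lt _ hpn)]
      rw [List.reverse_append, List.reverse_append, hdq, hL, List.reverse_append]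
      simp only [List.reverse_reverse, List.reverse_singleton, List.singleton_append,
        List.append_assoc]
      exact (List.suffix_cons 1 s).isInfix.trans (List.prefix_append _ _).isInfix
    · -- h / b ^ n < b ^ k
      rw [Nat.div_lt_iff_lt_mul hpn]
      calc h < b ^ (n + k) := hlt
      _ = b ^ k * b ^ n := by rw [← pow_add, Nat.add_comm]
    · rw [avoidF, Finset.mem_filter, Finset.mem_range]
      exact ⟨Nat.mod_lt _ hpn, avoid_mod_pow hb s h n havoid⟩
  have hinj : Set.InjOn (fun h => (h / b ^ n, h % b ^ n)) (avoidF b s (b ^ (n + k))) := by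
    intro x _ y _ hxy
    simp only [Prod.mk.injEq] at hxy
    calc x = x / b ^ n * b ^ n + x % b ^ n := (Nat.div_add_mod' x (b ^ n)).symm
    _ = y / b ^ n * b ^ n + y % b ^ n := by rw [hxy.1, hxy.2]
    _ = y := Nat.div_add_mod' y (b ^ n)
  calc (avoidF b s (b ^ (n + k))).card
      ≤ (((Finset.range (b ^ k)).erase q) ×ˢ (avoidF b s (b ^ n))).card :=
        Finset.card_le_card_of_injOn _ hmaps hinj
  _ = (b ^ k - 1) * (avoidF b s (b ^ n)).card := by
      rw [Finset.card_product, Finset.card_erase_of_mem (Finset.mem_range.mpr hqlt),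
        Finset.card_range]

/-- Given a base b ≥ 2 and a non-empty string s of base-b digits, the set of
naturals whose base-b representation does not contain s as a contiguous
substring is small. -/
theorem smallSet_avoiding_digit_string (b : ℕ) (hb : 2 ≤ b) (s : List ℕ)
    (hs : s ≠ []) (hsd : ∀ d ∈ s, d < b) :
    SmallSet {x : ℕ | ¬ s <:+: (Nat.digits b x).reverse} := by
  intro μ hμ
  set X : Set ℕ := {x : ℕ | ¬ s <:+: (Nat.digits b x).reverse} with hXdef
  set k : ℕ := s.length + 1 with hk
  have hcover : ∀ n : ℕ, μ X ≤ ((avoidF b s (b ^ n)).card : ℝ) / ((b : ℝ) ^ n) := by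
    intro n
    have hpn : 0 < b ^ n := pow_pos (by omega) n
    have hsub : X ⊆ ⋃ h ∈ avoidF b s (b ^ n), AP (b ^ n) h := by
      intro x hx
      simp only [Set.mem_iUnion, exists_prop]
      refine ⟨x % b ^ n, ?_, ⟨x / b ^ n, (Nat.div_add_mod x (b ^ n)).symm⟩⟩
      rw [avoidF, Finset.mem_filter, Finset.mem_range]
      exact ⟨Nat.mod_lt _ hpn, avoid_mod_pow hb s x n hx⟩
    have h2 := uqd_cover hμ hpn (avoidF b s (b ^ n)) hsub
    rwa [Nat.cast_pow] at h2
  have hiter : ∀ m : ℕ, (avoidF b s (b ^ (m * k))).card ≤ (b ^ k - 1) ^ m := by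
    intro m
    induction m with
    | zero =>
      simp only [Nat.zero_mul, pow_zero]
      calc (avoidF b s (b ^ 0)).card ≤ (Finset.range (b ^ 0)).card := Finset.card_filter_le _ _
      _ = 1 := by simp
    | succ m ih =>
      have hstep := avoid_card_step hb s hsd (m * k)
      have hmk : (m + 1) * k = m * k + k := by ring
      rw [hmk]
      calc (avoidF b s (b ^ (m * k + k))).card
          ≤ (b ^ k - 1) * (avoidF b s (b ^ (m * k))).card := by rw [hk]; exact hstep
      _ ≤ (b ^ k - 1) * (b ^ k - 1) ^ m := Nat.mul_le_mul_left _ ih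
      _ = (b ^ k - 1) ^ (m + 1) := (pow_succ' _ _).symm
  set r : ℝ := ((b ^ k - 1 : ℕ) : ℝ) / ((b : ℝ) ^ k) with hr
  have hbkpos : (0:ℝ) < (b:ℝ) ^ k := by positivity
  have hr0 : 0 ≤ r := by positivity
  have hr1 : r < 1 := by
    rw [hr, div_lt_one hbkpos]
    calc ((b ^ k - 1 : ℕ) : ℝ) < ((b ^ k : ℕ) : ℝ) := by
          exact_mod_cast Nat.sub_lt (pow_pos (by omega) k) one_pos
    _ = (b:ℝ) ^ k := by push_cast; ring
  have hbound : ∀ m : ℕ, μ X ≤ r ^ m := by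
    intro m
    have hden : ((b:ℝ) ^ k) ^ m = (b:ℝ) ^ (m * k) := by rw [← pow_mul, mul_comm]
    calc μ X ≤ ((avoidF b s (b ^ (m * k))).card : ℝ) / ((b : ℝ) ^ (m * k)) := hcover (m * k)
    _ ≤ (((b ^ k - 1 : ℕ) : ℝ) ^ m) / (((b:ℝ) ^ k) ^ m) := by
        rw [hden]
        gcongr
        calc ((avoidF b s (b ^ (m * k))).card : ℝ) ≤ (((b ^ k - 1) ^ m : ℕ) : ℝ) := by
              exact_mod_cast hiter m
        _ = ((b ^ k - 1 : ℕ) : ℝ) ^ m := by push_cast; ring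
    _ = r ^ m := by rw [hr, div_pow]
  have hle : μ X ≤ 0 :=
    ge_of_tendsto' (tendsto_pow_atTop_nhds_zero_of_lt_one hr0 hr1) hbound
  linarith [uqd_nonneg hμ X]
end

section
/- Let X := { h! + h : h ∈ ℕ }. Then r_k(X) = k for every positive integer k; consequently, the upper Buck density of X equals 1, and in particular X is not small. -/
open Set Filter Topology

/-!
Since `k ∣ (r + k)!`, the element `(r + k)! + (r + k)` of `X` lies in the class of `r` mod `k`,
so `X` meets every residue class. A finite union of arithmetic progressions is invariant under
adding the product `L` of its moduli, so if it contains `X` it contains a tail of `ℕ` and has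
upper asymptotic density `1`. For non-smallness, `S ↦ inf_k r_k(S) / k` is an upper
quasi-density taking the value `1` on `X`: translation invariance is that of `r_k`, and
subadditivity and the scaling law follow from `r_{ck}(c·S) = r_k(S)` and `r_{km}(S) ≤ m r_k(S)`.
-/

def MeetsEveryResidueClass (S : Set ℕ) : Prop :=
  ∀ k r : ℕ, r < k → (S ∩ AP k r).Nonempty

lemma meetsEveryResidueClass_factorial_add_self :
    MeetsEveryResidueClass {x : ℕ | ∃ h : ℕ, x = Nat.factorial h + h} := by
  intro k r hr
  obtain ⟨m, hm⟩ := Nat.dvd_factorial (by omega : 0 < k) (Nat.le_add_left k r)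
  exact ⟨_, ⟨r + k, rfl⟩, m + 1, by rw [hm]; ring⟩

lemma rk_eq_ncard_image {k : ℕ} (hk : 0 < k) (S : Set ℕ) :
    rk k S = ((· % k) '' S).ncard := by
  unfold rk
  congr 1
  ext h
  constructor
  · rintro ⟨hlt, x, hxS, m, rfl⟩
    exact ⟨k * m + h, hxS, by simp [Nat.mod_eq_of_lt hlt]⟩
  · rintro ⟨x, hxS, rfl⟩
    exact ⟨Nat.mod_lt _ hk, x, hxS, x / k, (Nat.div_add_mod x k).symm⟩

lemma rk_le_self (k : ℕ) (S : Set ℕ) : rk k S ≤ k :=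
  (Set.ncard_le_ncard (fun _ h => h.1) (Set.finite_Iio k)).trans_eq (Set.ncard_Iio_nat k)

lemma rk_eq_self_of_meetsEveryResidueClass {S : Set ℕ} (hS : MeetsEveryResidueClass S)
    (k : ℕ) : rk k S = k := by
  have hall : {h : ℕ | h < k ∧ (S ∩ AP k h).Nonempty} = Set.Iio k :=
    Set.ext fun h => ⟨And.left, fun hh => ⟨hh, hS k h hh⟩⟩
  rw [rk, hall, Set.ncard_Iio_nat]

lemma rk_union_le (k : ℕ) (X Y : Set ℕ) : rk k (X ∪ Y) ≤ rk k X + rk k Y := by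
  unfold rk
  refine (Set.ncard_le_ncard ?_ ((Set.finite_Iio k).subset ?_)).trans (Set.ncard_union_le _ _)
  · rintro h ⟨hlt, x, hx | hx, hxAP⟩
    · exact Or.inl ⟨hlt, x, hx, hxAP⟩
    · exact Or.inr ⟨hlt, x, hx, hxAP⟩
  · rintro h (hh | hh) <;> exact hh.1

lemma rk_image_add {k : ℕ} (hk : 0 < k) (S : Set ℕ) (t : ℕ) :
    rk k ((fun x => x + t) '' S) = rk k S := by
  rw [rk_eq_ncard_image hk, rk_eq_ncard_image hk, ← Set.image_comp]
  have hcomp : (· % k) ∘ (fun x => x + t) = (fun r => (r + t) % k) ∘ (· % k) := by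
    funext x; simp [Nat.mod_add_mod]
  rw [hcomp, Set.image_comp]
  refine Set.InjOn.ncard_image ?_
  rintro _ ⟨x, _, rfl⟩ _ ⟨y, _, rfl⟩ hxy
  simpa [Nat.ModEq, Nat.mod_mod] using Nat.ModEq.add_right_cancel' t hxy

lemma rk_mul_image {c k : ℕ} (hc : 0 < c) (hk : 0 < k) (S : Set ℕ) :
    rk (c * k) ((fun x => c * x) '' S) = rk k S := by
  rw [rk_eq_ncard_image (Nat.mul_pos hc hk), rk_eq_ncard_image hk, ← Set.image_comp]
  have hcomp : (· % (c * k)) ∘ (fun x => c * x) = (fun r => c * r) ∘ (· % k) := by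
    funext x; simp [Nat.mul_mod_mul_left]
  rw [hcomp, Set.image_comp]
  exact Set.ncard_image_of_injective _ (mul_right_injective₀ hc.ne')

/-- A residue `y` mod `k * m` is determined by `(y % k, y / k)`, and `y / k < m`. -/
lemma rk_mul_le {k m : ℕ} (hk : 0 < k) (hm : 0 < m) (S : Set ℕ) :
    rk (k * m) S ≤ rk k S * m := by
  rw [rk_eq_ncard_image hk, rk_eq_ncard_image (Nat.mul_pos hk hm)]
  calc ((· % (k * m)) '' S).ncard ≤ (((· % k) '' S) ×ˢ Set.Iio m).ncard :=
        Set.ncard_le_ncard_of_injOn (fun y => (y % k, y / k)) ?_ ?_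
          (((Set.finite_Iio k).subset ?_).prod (Set.finite_Iio m))
    _ = ((· % k) '' S).ncard * m := by rw [Set.ncard_prod, Set.ncard_Iio_nat]
  · rintro _ ⟨x, hx, rfl⟩
    exact ⟨⟨x, hx, (Nat.mod_mul_right_mod x k m).symm⟩,
      Nat.div_lt_of_lt_mul (Nat.mod_lt x (Nat.mul_pos hk hm))⟩
  · intro y _ z _ hyz
    simp only [Prod.mk.injEq] at hyz
    rw [← Nat.div_add_mod y k, ← Nat.div_add_mod z k, hyz.1, hyz.2]
  · rintro _ ⟨x, _, rfl⟩
    exact Nat.mod_lt x hk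

lemma rk_mul_div_le {k m : ℕ} (hk : 0 < k) (hm : 0 < m) (S : Set ℕ) :
    (rk (k * m) S : ℝ) / (k * m : ℕ) ≤ (rk k S : ℝ) / k := by
  have hm' : (0 : ℝ) < m := by exact_mod_cast hm
  calc (rk (k * m) S : ℝ) / (k * m : ℕ) ≤ (rk k S * m : ℕ) / (k * m : ℕ) := by
        gcongr; exact rk_mul_le hk hm S
    _ = (rk k S : ℝ) / k := by push_cast; exact mul_div_mul_right _ _ hm'.ne'

noncomputable def residueDensity (S : Set ℕ) : ℝ :=
  ⨅ k : ℕ+, (rk k S : ℝ) / k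

lemma residueDensity_le {S : Set ℕ} {k : ℕ} (hk : 0 < k) :
    residueDensity S ≤ (rk k S : ℝ) / k :=
  ciInf_le (f := fun k : ℕ+ => (rk k S : ℝ) / k)
    ⟨0, by rintro _ ⟨k, rfl⟩; positivity⟩ ⟨k, hk⟩

lemma le_residueDensity_iff {S : Set ℕ} {a : ℝ} :
    a ≤ residueDensity S ↔ ∀ k : ℕ, 0 < k → a ≤ (rk k S : ℝ) / k :=
  ⟨fun ha _ hk => ha.trans (residueDensity_le hk), fun h => le_ciInf fun k => h k k.pos⟩

lemma residueDensity_eq_one_of_meetsEveryResidueClass {S : Set ℕ}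
    (hS : MeetsEveryResidueClass S) : residueDensity S = 1 := by
  have hk (k : ℕ+) : (rk k S : ℝ) / k = 1 := by
    rw [rk_eq_self_of_meetsEveryResidueClass hS]; exact div_self (by positivity)
  simp only [residueDensity, hk, ciInf_const]

lemma residueDensity_le_one (S : Set ℕ) : residueDensity S ≤ 1 :=
  (residueDensity_le one_pos).trans (by simpa using rk_le_self 1 S)

lemma residueDensity_union_le (X Y : Set ℕ) :
    residueDensity (X ∪ Y) ≤ residueDensity X + residueDensity Y := by
  have h (k l : ℕ) (hk : 0 < k) (hl : 0 < l) :
      residueDensity (X ∪ Y) ≤ (rk k X : ℝ) / k + (rk l Y : ℝ) / l :=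
    calc residueDensity (X ∪ Y) ≤ (rk (k * l) (X ∪ Y) : ℝ) / (k * l : ℕ) :=
          residueDensity_le (Nat.mul_pos hk hl)
      _ ≤ ((rk (k * l) X : ℝ) + rk (k * l) Y) / (k * l : ℕ) := by
          gcongr; exact_mod_cast rk_union_le _ X Y
      _ = (rk (k * l) X : ℝ) / (k * l : ℕ) + (rk (l * k) Y : ℝ) / (l * k : ℕ) := by
          rw [add_div, mul_comm l k]
      _ ≤ (rk k X : ℝ) / k + (rk l Y : ℝ) / l :=
          add_le_add (rk_mul_div_le hk hl X) (rk_mul_div_le hl hk Y)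
  have hX (l : ℕ) (hl : 0 < l) :
      residueDensity (X ∪ Y) - (rk l Y : ℝ) / l ≤ residueDensity X :=
    le_residueDensity_iff.2 fun k hk => by linarith [h k l hk hl]
  have hY : residueDensity (X ∪ Y) - residueDensity X ≤ residueDensity Y :=
    le_residueDensity_iff.2 fun l hl => by linarith [hX l hl]
  linarith

lemma residueDensity_image_add (S : Set ℕ) (t : ℕ) :
    residueDensity ((fun x => x + t) '' S) = residueDensity S := by
  simp only [residueDensity, rk_image_add (PNat.pos _)]

lemma residueDensity_image_mul (S : Set ℕ) {c : ℕ} (hc : 0 < c) :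
    residueDensity ((fun x => c * x) '' S) = residueDensity S / c := by
  have hc' : (0 : ℝ) < c := by exact_mod_cast hc
  have hrk {k : ℕ} (hk : 0 < k) :
      (rk (c * k) ((fun x => c * x) '' S) : ℝ) / (c * k : ℕ) = (rk k S : ℝ) / k / c := by
    rw [rk_mul_image hc hk]; push_cast; rw [div_div, mul_comm]
  apply le_antisymm
  · rw [le_div_iff₀ hc', le_residueDensity_iff]
    intro k hk
    exact (le_div_iff₀ hc').1 <| hrk hk ▸ residueDensity_le (Nat.mul_pos hc hk)
  · refine le_residueDensity_iff.2 fun k hk => ?_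
    calc residueDensity S / c ≤ (rk k S : ℝ) / k / c := by gcongr; exact residueDensity_le hk
      _ = (rk (c * k) ((fun x => c * x) '' S) : ℝ) / (c * k : ℕ) := (hrk hk).symm
      _ ≤ (rk k ((fun x => c * x) '' S) : ℝ) / k := by
          simpa only [mul_comm k c] using rk_mul_div_le hk hc _

lemma isUpperQuasiDensity_residueDensity : IsUpperQuasiDensity residueDensity :=
  ⟨residueDensity_eq_one_of_meetsEveryResidueClass fun k r _ => ⟨k * 0 + r, trivial, 0, rfl⟩,
    residueDensity_le_one, residueDensity_union_le,
    fun X _ hk => residueDensity_image_mul X hk, residueDensity_image_add⟩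

lemma not_smallSet_of_meetsEveryResidueClass {S : Set ℕ} (hS : MeetsEveryResidueClass S) :
    ¬ SmallSet S := fun hsmall => one_ne_zero <|
  (residueDensity_eq_one_of_meetsEveryResidueClass hS).symm.trans
    (hsmall _ isUpperQuasiDensity_residueDensity)

lemma upperAsymptoticDensity_eq_one_of_eventually_mem {A : Set ℕ}
    (hA : ∀ᶠ n in atTop, n ∈ A) : upperAsymptoticDensity A = 1 := by
  obtain ⟨N, hN⟩ := eventually_atTop.1 hA
  have hupper (n : ℕ) : ((A ∩ Set.Icc 1 n).ncard : ℝ) / n ≤ 1 := by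
    refine div_le_one_of_le₀ ?_ n.cast_nonneg
    exact_mod_cast (Set.ncard_le_ncard Set.inter_subset_right).trans_eq (by simp)
  have hlower (n : ℕ) (hn : 0 < n) :
      1 - (N : ℝ) / n ≤ ((A ∩ Set.Icc 1 n).ncard : ℝ) / n := by
    have hcover : Set.Icc 1 n ⊆ (A ∩ Set.Icc 1 n) ∪ Set.Iio N := fun x hx =>
      (lt_or_ge x N).elim Or.inr fun hxN => Or.inl ⟨hN x hxN, hx⟩
    have hcard : (n : ℝ) ≤ (A ∩ Set.Icc 1 n).ncard + N := by
      exact_mod_cast (by simpa using (Set.ncard_le_ncard hcover).trans (Set.ncard_union_le _ _))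
    rw [one_sub_div (by positivity), div_le_div_iff_of_pos_right (by positivity)]
    linarith
  have hlim : Tendsto (fun n : ℕ => 1 - (N : ℝ) / n) atTop (𝓝 1) := by
    simpa using tendsto_const_nhds.sub (tendsto_const_div_atTop_nhds_zero_nat (N : ℝ))
  refine Tendsto.limsup_eq (tendsto_of_tendsto_of_tendsto_of_le_of_le' hlim tendsto_const_nhds ?_
    (Eventually.of_forall hupper))
  filter_upwards [eventually_gt_atTop 0] with n hn using hlower n hn

lemma eventually_mem_of_add_mul_mem {A : Set ℕ} {L : ℕ} (hL : 0 < L)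
    (hper : ∀ x ∈ A, ∀ j, x + L * j ∈ A) (hA : ∀ r < L, (A ∩ AP L r).Nonempty) :
    ∀ᶠ n in atTop, n ∈ A := by
  have hclass (r : ℕ) (hr : r ∈ Set.Iio L) : ∀ᶠ j in atTop, L * j + r ∈ A := by
    obtain ⟨_, hx, m, rfl⟩ := hA r hr
    filter_upwards [eventually_ge_atTop m] with j hj
    have := hper _ hx (j - m)
    rwa [add_right_comm, ← mul_add, Nat.add_sub_cancel' hj] at this
  obtain ⟨j₀, hj₀⟩ := eventually_atTop.1 ((Set.finite_Iio L).eventually_all.2 hclass)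
  filter_upwards [eventually_ge_atTop (L * j₀)] with n hn
  rw [← Nat.div_add_mod n L]
  exact hj₀ (n / L) ((Nat.le_div_iff_mul_le hL).2 (by linarith [mul_comm L j₀])) _
    (Nat.mod_lt n hL)

lemma IsFinUnionAP.exists_add_mul_mem {A : Set ℕ} (hA : IsFinUnionAP A) :
    ∃ L > 0, ∀ x ∈ A, ∀ j, x + L * j ∈ A := by
  obtain ⟨s, hs, rfl⟩ := hA
  refine ⟨∏ p ∈ s, p.1, Finset.prod_pos hs, fun x hx j => ?_⟩
  obtain ⟨p, hp, m, rfl⟩ := Set.mem_iUnion₂.1 hx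
  obtain ⟨u, hu⟩ := Finset.dvd_prod_of_mem Prod.fst hp
  exact Set.mem_biUnion hp ⟨m + u * j, by rw [hu]; ring⟩

lemma IsFinUnionAP.eventually_mem_of_subset {A S : Set ℕ} (hA : IsFinUnionAP A)
    (hS : MeetsEveryResidueClass S) (hSA : S ⊆ A) : ∀ᶠ n in atTop, n ∈ A := by
  obtain ⟨L, hL, hper⟩ := hA.exists_add_mul_mem
  exact eventually_mem_of_add_mul_mem hL hper fun r hr =>
    (hS L r hr).mono (Set.inter_subset_inter_left _ hSA)

lemma buckDensity_eq_one_of_meetsEveryResidueClass {S : Set ℕ}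
    (hS : MeetsEveryResidueClass S) : buckDensity S = 1 := by
  have hunivAP : IsFinUnionAP Set.univ :=
    ⟨{(1, 0)}, by simp, by ext x; simp [AP]⟩
  suffices h :
      {d : ℝ | ∃ A, IsFinUnionAP A ∧ S ⊆ A ∧ d = upperAsymptoticDensity A} = {1} by
    rw [buckDensity, h, csInf_singleton]
  refine Set.eq_singleton_iff_unique_mem.2 ⟨⟨Set.univ, hunivAP, Set.subset_univ S, ?_⟩, ?_⟩
  · exact (upperAsymptoticDensity_eq_one_of_eventually_mem (.of_forall fun _ => trivial)).symm
  · rintro d ⟨A, hA, hSA, rfl⟩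
    exact upperAsymptoticDensity_eq_one_of_eventually_mem (hA.eventually_mem_of_subset hS hSA)

/-- For X = {h! + h : h ∈ ℕ}, one has r_k(X) = k for every positive k; hence
the upper Buck density of X is 1 and in particular X is not small. -/
theorem factorial_add_self_buckDensity_one :
    (∀ k : ℕ, 0 < k → rk k {x : ℕ | ∃ h : ℕ, x = Nat.factorial h + h} = k) ∧
    buckDensity {x : ℕ | ∃ h : ℕ, x = Nat.factorial h + h} = 1 ∧
    ¬ SmallSet {x : ℕ | ∃ h : ℕ, x = Nat.factorial h + h} :=
  ⟨fun k _ => rk_eq_self_of_meetsEveryResidueClass meetsEveryResidueClass_factorial_add_self k,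
    buckDensity_eq_one_of_meetsEveryResidueClass meetsEveryResidueClass_factorial_add_self,
    not_smallSet_of_meetsEveryResidueClass meetsEveryResidueClass_factorial_add_self⟩
end
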